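/- arXiv:2002.11693 — 4 statements merged into one kernel-verified Lean document; each statement's English description precedes it below -/
import Mathlib

section
/- Let W_1,…,W_m be independent exponential random variables with rates a_1,…,a_m > 0, let a_* = min_i a_i, W = W_1+⋯+W_m, and μ = E[W] = Σ_i 1/a_i. Then for any 0 < λ ≤ 1, P(W ≤ λμ) ≤ exp(−a_* μ (λ − 1 − log λ)). -/
/-!
Apply the Chernoff bound at `t = -a_* (λ⁻¹ - 1)`. The moment generating function of an
exponential variable of rate `a` at `t` is `a / (a - t)`, and Bernoulli's inequality
`(λ⁻¹)^(a_*/a) ≤ 1 + (a_*/a)(λ⁻¹ - 1)`, valid because `a_*/a ≤ 1`, bounds it by `λ^(a_*/a)`.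
By independence the moment generating function of `W` at `t` is then at most
`∏ λ^(a_*/a_i) = λ^(a_* μ)`, and `exp(a_* (λ⁻¹ - 1) λμ) λ^(a_* μ) = exp(-a_* μ (λ - 1 - log λ))`.
-/

open MeasureTheory ProbabilityTheory Real Set

lemma mgf_id_expMeasure {r t : ℝ} (hr : 0 < r) (ht : t < r) :
    mgf id (expMeasure r) t = r / (r - t) := by
  have hdensity : ∀ x, exponentialPDFReal r x • exp (t * x)
      = (Ici 0).indicator (fun x ↦ r * exp ((t - r) * x)) x := by
    intro x
    by_cases hx : 0 ≤ x
    · simp only [exponentialPDFReal, gammaPDFReal, hx, indicator_of_mem (mem_Ici.mpr hx),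
        if_true, rpow_one, Gamma_one, div_one, sub_self, rpow_zero, mul_one, smul_eq_mul,
        mul_assoc, ← exp_add]
      ring_nf
    · simp [exponentialPDFReal, gammaPDFReal, hx]
  calc mgf id (expMeasure r) t
      = ∫ x, exponentialPDFReal r x • exp (t * x) := by
        change ∫ x, exp (t * x) ∂(volume.withDensity (exponentialPDF r)) = _
        rw [integral_withDensity_eq_integral_toReal_smul
          (show Measurable (exponentialPDF r) from
            (measurable_exponentialPDFReal r).ennreal_ofReal)
          (Filter.Eventually.of_forall fun _ ↦ ENNReal.ofReal_lt_top)]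
        simp only [exponentialPDF, ENNReal.toReal_ofReal (exponentialPDFReal_nonneg hr _)]
    _ = r * ∫ x in Ioi 0, exp ((t - r) * x) := by
        rw [integral_congr_ae (Filter.Eventually.of_forall hdensity),
          integral_indicator measurableSet_Ici, integral_Ici_eq_integral_Ioi, integral_const_mul]
    _ = r / (r - t) := by
        rw [integral_exp_mul_Ioi (sub_neg.mpr ht), mul_zero, exp_zero, neg_div, ← div_neg, neg_sub]
        ring

section

variable {Ω : Type*} [MeasurableSpace Ω] {μ : Measure Ω} {X : Ω → ℝ} {r t : ℝ}

lemma mgf_eq_of_map_eq_expMeasure (hX : AEMeasurable X μ) (h : μ.map X = expMeasure r)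
    (hr : 0 < r) (ht : t < r) : mgf X μ t = r / (r - t) := by
  rw [← mgf_id_map hX, h, mgf_id_expMeasure hr ht]

lemma integrable_exp_mul_of_map_eq_expMeasure [NeZero μ] (hX : AEMeasurable X μ)
    (h : μ.map X = expMeasure r) (hr : 0 < r) (ht : t < r) :
    Integrable (fun ω ↦ exp (t * X ω)) μ := by
  rw [← mgf_pos_iff, mgf_eq_of_map_eq_expMeasure hX h hr ht]
  exact div_pos hr (sub_pos.mpr ht)

end

lemma div_add_mul_inv_sub_one_le_rpow {a b lam : ℝ} (hb : 0 < b) (hba : b ≤ a)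
    (hlam0 : 0 < lam) (hlam1 : lam ≤ 1) : a / (a + b * (lam⁻¹ - 1)) ≤ lam ^ (b / a) := by
  have ha : 0 < a := hb.trans_le hba
  have hlam_inv : 1 ≤ lam⁻¹ := one_le_inv_iff₀.mpr ⟨hlam0, hlam1⟩
  have bernoulli : lam⁻¹ ^ (b / a) ≤ 1 + b / a * (lam⁻¹ - 1) := by
    simpa using rpow_one_add_le_one_add_mul_self (s := lam⁻¹ - 1) (by linarith) (by positivity)
      (div_le_one_of_le₀ hba ha.le)
  calc a / (a + b * (lam⁻¹ - 1)) = (1 + b / a * (lam⁻¹ - 1))⁻¹ := by field_simp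
    _ ≤ (lam⁻¹ ^ (b / a))⁻¹ := inv_anti₀ (by positivity) bernoulli
    _ = lam ^ (b / a) := by rw [inv_rpow hlam0.le, inv_inv]

theorem measureReal_sum_le_mul_sum_inv_le {Ω ι : Type*} [MeasurableSpace Ω] [Fintype ι]
    {μ : Measure Ω} {W : ι → Ω → ℝ} {a : ι → ℝ} {b lam : ℝ} (hindep : iIndepFun W μ)
    (hmeas : ∀ i, Measurable (W i)) (hexp : ∀ i, μ.map (W i) = expMeasure (a i)) (hb : 0 < b)
    (hba : ∀ i, b ≤ a i) (hlam0 : 0 < lam) (hlam1 : lam ≤ 1) :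
    μ.real {ω | ∑ i, W i ω ≤ lam * ∑ i, (a i)⁻¹}
      ≤ exp (-b * (∑ i, (a i)⁻¹) * (lam - 1 - log lam)) := by
  have := hindep.isProbabilityMeasure
  have ha i : 0 < a i := hb.trans_le (hba i)
  have hlam_inv : 1 ≤ lam⁻¹ := one_le_inv_iff₀.mpr ⟨hlam0, hlam1⟩
  set t := -(b * (lam⁻¹ - 1)) with ht_def
  have ht : t ≤ 0 := neg_nonpos.mpr (mul_nonneg hb.le (sub_nonneg.mpr hlam_inv))
  have ht_lt i : t < a i := ht.trans_lt (ha i)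
  have hint i (_ : i ∈ Finset.univ) : Integrable (fun ω ↦ exp (t * W i ω)) μ :=
    integrable_exp_mul_of_map_eq_expMeasure (hmeas i).aemeasurable (hexp i) (ha i) (ht_lt i)
  have chernoff := measure_le_le_exp_mul_mgf (X := ∑ i, W i) (lam * ∑ i, (a i)⁻¹) ht
    (hindep.integrable_exp_mul_sum hmeas hint)
  rw [hindep.mgf_sum hmeas] at chernoff
  simp only [Finset.sum_apply] at chernoff
  calc μ.real {ω | ∑ i, W i ω ≤ lam * ∑ i, (a i)⁻¹}
      ≤ exp (-t * (lam * ∑ i, (a i)⁻¹)) * ∏ i, mgf (W i) μ t := chernoff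
    _ ≤ exp (-t * (lam * ∑ i, (a i)⁻¹)) * ∏ i, lam ^ (b / a i) := by
        refine mul_le_mul_of_nonneg_left (Finset.prod_le_prod (fun i _ ↦ mgf_nonneg)
          fun i _ ↦ ?_) (exp_pos _).le
        rw [mgf_eq_of_map_eq_expMeasure (hmeas i).aemeasurable (hexp i) (ha i) (ht_lt i),
          ht_def, sub_neg_eq_add]
        exact div_add_mul_inv_sub_one_le_rpow hb (hba i) hlam0 hlam1
    _ = exp (-b * (∑ i, (a i)⁻¹) * (lam - 1 - log lam)) := by
        rw [← rpow_sum_of_pos hlam0, rpow_def_of_pos hlam0, ← exp_add]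
        simp only [div_eq_mul_inv, ← Finset.mul_sum]
        congr 1
        rw [ht_def]
        field_simp
        ring

theorem janson_exponential_lower_tail_general
    {Ω : Type*} [MeasureSpace Ω]
    (m : ℕ) (hm : 0 < m) (a : Fin m → ℝ) (ha : ∀ i, 0 < a i)
    (W : Fin m → Ω → ℝ) (hmeas : ∀ i, Measurable (W i))
    (hindep : iIndepFun W ℙ)
    (hexp : ∀ i, Measure.map (W i) ℙ = expMeasure (a i))
    (lam : ℝ) (hlam0 : 0 < lam) (hlam1 : lam ≤ 1) :
    ℙ {ω | ∑ i, W i ω ≤ lam * ∑ i, (a i)⁻¹}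
      ≤ ENNReal.ofReal
          (Real.exp (-(⨅ i, a i) * (∑ i, (a i)⁻¹) * (lam - 1 - Real.log lam))) := by
  have := hindep.isProbabilityMeasure
  have : Nonempty (Fin m) := ⟨⟨0, hm⟩⟩
  obtain ⟨j, hj⟩ : ∃ j, a j = ⨅ i, a i := exists_eq_ciInf_of_finite
  rw [ENNReal.le_ofReal_iff_toReal_le (measure_ne_top _ _) (exp_pos _).le]
  exact measureReal_sum_le_mul_sum_inv_le hindep hmeas hexp (hj ▸ ha j)
    (fun i ↦ ciInf_le (Finite.bddBelow_range a) i) hlam0 hlam1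

/-- Janson's inequality for sums of independent exponentials: if W_i is exponential with
rate a_i, W = ∑ W_i, μ = E W = ∑ 1/a_i, a_* = min_i a_i, then for 0 < λ ≤ 1,
P(W ≤ λμ) ≤ exp(−a_* μ (λ − 1 − log λ)). -/
theorem janson_exponential_lower_tail
    {Ω : Type*} [MeasureSpace Ω] (hP : IsProbabilityMeasure (ℙ : Measure Ω))
    (m : ℕ) (hm : 0 < m) (a : Fin m → ℝ) (ha : ∀ i, 0 < a i)
    (W : Fin m → Ω → ℝ) (hmeas : ∀ i, Measurable (W i))
    (hindep : iIndepFun W ℙ)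
    (hexp : ∀ i, Measure.map (W i) ℙ = expMeasure (a i))
    (lam : ℝ) (hlam0 : 0 < lam) (hlam1 : lam ≤ 1) :
    ℙ {ω | ∑ i, W i ω ≤ lam * ∑ i, (a i)⁻¹}
      ≤ ENNReal.ofReal
          (Real.exp (-(⨅ i, a i) * (∑ i, (a i)⁻¹) * (lam - 1 - Real.log lam))) :=
  janson_exponential_lower_tail_general m hm a ha W hmeas hindep hexp lam hlam0 hlam1
end

section
/- For any continuous random vector q in ℝ^d, any N ≥ 1, independent copies q_1,…,q_N of q with convex hull Q_N, and any measurable set A ⊆ ℝ^d, E[Vol(Q_N)] ≤ Vol(A) + N · (sup_{x ∈ A^c} ξ(x)) · Vol(A^c ∩ {x : ξ(x) > 0}), where ξ(x) = inf{P(q ∈ H) : H a closed half-space containing x}. -/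
open MeasureTheory ProbabilityTheory Set
open scoped ENNReal

/-!
If `x ∈ Q_N`, every closed half-space `H ∋ x` contains some `q_i` (a convex function attains its
maximum over a hull at a vertex), so the union bound gives `P(x ∈ Q_N) ≤ N P(q ∈ H)` and hence
`P(x ∈ Q_N) ≤ N ξ(x)`. By Fubini, `E Vol(Q_N ∩ Aᶜ) = ∫_{Aᶜ} P(x ∈ Q_N) dx ≤ N ∫_{Aᶜ} ξ`, which is
at most `N (sup_{Aᶜ} ξ) Vol(Aᶜ ∩ {ξ > 0})`; the part of `Q_N` inside `A` has volume at most
`Vol(A)`.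
-/

section ConvexHull

variable {ι E : Type*} [Fintype ι] [AddCommGroup E] [Module ℝ E]

theorem convexHull_range_eq_image_stdSimplex (v : ι → E) :
    convexHull ℝ (range v) = (fun w : ι → ℝ => ∑ i, w i • v i) '' stdSimplex ℝ ι := by
  classical
  have hv : range v = Fintype.linearCombination ℝ v '' range fun i => Pi.single i 1 := by
    rw [← range_comp]
    congr 1
    ext i
    simp
  rw [hv, ← LinearMap.image_convexHull, convexHull_rangle_single_eq_stdSimplex]
  rfl

theorem isClosed_setOf_mem_convexHull_range [TopologicalSpace E] [T2Space E] [ContinuousAdd E]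
    [ContinuousSMul ℝ E] :
    IsClosed {p : (ι → E) × E | p.2 ∈ convexHull ℝ (range p.1)} := by
  have : CompactSpace (stdSimplex ℝ ι) :=
    isCompact_iff_compactSpace.mp (isCompact_stdSimplex ℝ ι)
  have hclosed : IsClosed
      {q : stdSimplex ℝ ι × ((ι → E) × E) | ∑ i, (q.1 : ι → ℝ) i • q.2.1 i = q.2.2} :=
    isClosed_eq (continuous_finsetSum _ fun i _ =>
      ((continuous_apply i).comp (continuous_subtype_val.comp continuous_fst)).smul
        ((continuous_apply i).comp (continuous_fst.comp continuous_snd))) (by fun_prop)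
  convert isClosedMap_snd_of_compactSpace _ hclosed using 1
  ext ⟨v, x⟩
  simp only [mem_ofPred_eq, convexHull_range_eq_image_stdSimplex, mem_image, Prod.exists,
    exists_eq_right, Subtype.exists]
  exact ⟨fun ⟨w, hw, h⟩ => ⟨w, hw, h⟩, fun ⟨w, hw, h⟩ => ⟨w, hw, h⟩⟩

variable {Ω : Type*} [MeasurableSpace Ω]

theorem measure_mem_convexHull_range_le_sum (μ : Measure Ω) (X : ι → Ω → E) {f : E → ℝ}
    (hf : ConvexOn ℝ univ f) {x : E} {c : ℝ} (hc : c ≤ f x) :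
    μ {ω | x ∈ convexHull ℝ (range fun i => X i ω)} ≤ ∑ i, μ {ω | c ≤ f (X i ω)} := by
  calc _ ≤ μ (⋃ i, {ω | c ≤ f (X i ω)}) := measure_mono fun ω hω => by
          obtain ⟨_, ⟨i, rfl⟩, hi⟩ := hf.exists_ge_of_mem_convexHull (subset_univ _) hω
          exact mem_iUnion.2 ⟨i, hc.trans hi⟩
    _ ≤ _ := measure_iUnion_fintype_le μ _

theorem measure_mem_convexHull_range_le_card_mul [MeasurableSpace E] (μ : Measure Ω)
    {X : ι → Ω → E} {Y : Ω → E} (hXY : ∀ i, IdentDistrib (X i) Y μ μ) {f : E → ℝ}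
    (hf : ConvexOn ℝ univ f) (hf_meas : Measurable f) {x : E} {c : ℝ} (hc : c ≤ f x) :
    μ {ω | x ∈ convexHull ℝ (range fun i => X i ω)} ≤ Fintype.card ι * μ {ω | c ≤ f (Y ω)} := by
  have hH : MeasurableSet {y | c ≤ f y} := measurableSet_le measurable_const hf_meas
  calc _ ≤ ∑ i, μ {ω | c ≤ f (X i ω)} := measure_mem_convexHull_range_le_sum μ X hf hc
    _ = ∑ _i : ι, μ {ω | c ≤ f (Y ω)} :=
        Finset.sum_congr rfl fun i _ => (hXY i).measure_mem_eq hH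
    _ = _ := by rw [Finset.sum_const, Finset.card_univ, nsmul_eq_mul]

end ConvexHull

section Lintegral

variable {Ω : Type*} [MeasurableSpace Ω]

theorem lintegral_measure_inter_eq_setLIntegral {β : Type*} [MeasurableSpace β]
    (μ : Measure Ω) (ν : Measure β) [SFinite μ] [SFinite ν] {S : Set (Ω × β)}
    (hS : MeasurableSet S) {B : Set β} (hB : MeasurableSet B) :
    ∫⁻ ω, ν ({b | (ω, b) ∈ S} ∩ B) ∂μ = ∫⁻ b in B, μ {ω | (ω, b) ∈ S} ∂ν := by
  have hSB : MeasurableSet (S ∩ Prod.snd ⁻¹' B) := hS.inter (measurable_snd hB)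
  calc _ = μ.prod ν (S ∩ Prod.snd ⁻¹' B) := (Measure.prod_apply hSB).symm
    _ = ∫⁻ b, μ ((·, b) ⁻¹' (S ∩ Prod.snd ⁻¹' B)) ∂ν := Measure.prod_apply_symm hSB
    _ = _ := by
        rw [← lintegral_indicator hB]
        congr with b
        by_cases hb : b ∈ B <;> simp [hb, preimage]

theorem setLIntegral_le_iSup_mul_measure_pos (μ : Measure Ω) {s : Set Ω} (hs : MeasurableSet s)
    (f : Ω → ℝ≥0∞) :
    ∫⁻ ω in s, f ω ∂μ ≤ (⨆ ω ∈ s, f ω) * μ (s ∩ {ω | 0 < f ω}) := by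
  rw [← lintegral_indicator hs]
  refine (lintegral_mono fun ω => ?_).trans (lintegral_indicator_const_le _ _)
  by_cases hω : ω ∈ s
  · rcases eq_zero_or_pos (f ω) with hf | hf
    · simp [hω, hf]
    · simpa [hω, hf] using le_biSup f hω
  · simp [hω]

end Lintegral

theorem dfm_upper_bound_general
    (d N : ℕ) (hN : 1 ≤ N)
    {Ω : Type*} [MeasureSpace Ω] (hP : IsProbabilityMeasure (ℙ : Measure Ω))
    (q : Ω → (Fin d → ℝ)) (hq : Measurable q)
    (qs : Fin N → Ω → (Fin d → ℝ)) (hmeas : ∀ i, Measurable (qs i))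
    (hcopies : ∀ i, Measure.map (qs i) ℙ = Measure.map q ℙ)
    (A : Set (Fin d → ℝ)) (hA : MeasurableSet A)
    (ξ : (Fin d → ℝ) → ℝ≥0∞)
    (hξ : ξ = fun x => ⨅ (a : Fin d → ℝ) (_ : a ≠ 0) (c : ℝ) (_ : c ≤ ∑ i, a i * x i),
        ℙ {ω | c ≤ ∑ i, a i * q ω i}) :
    ∫⁻ ω, volume (convexHull ℝ (Set.range fun i => qs i ω)) ∂ℙ
      ≤ volume A + N * (⨆ x ∈ Aᶜ, ξ x) * volume (Aᶜ ∩ {x | 0 < ξ x}) := by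
  set Q : Ω → Set (Fin d → ℝ) := fun ω => convexHull ℝ (range fun i => qs i ω)
  have hQ : MeasurableSet {p : Ω × (Fin d → ℝ) | p.2 ∈ Q p.1} :=
    isClosed_setOf_mem_convexHull_range.measurableSet.preimage
      ((measurable_pi_lambda _ fun i => (hmeas i).comp measurable_fst).prodMk measurable_snd)
  have hmem : ∀ x, ℙ {ω | x ∈ Q ω} ≤ N * ξ x := by
    intro x
    have hN₀ : (N : ℝ≥0∞) ≠ 0 := Nat.cast_ne_zero.2 (by omega)
    simp only [hξ, ENNReal.mul_iInf_of_ne hN₀ (ENNReal.natCast_ne_top N)]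
    refine le_iInf₂ fun a _ => le_iInf₂ fun c hc => ?_
    simpa only [Fintype.card_fin] using measure_mem_convexHull_range_le_card_mul ℙ
      (fun i => ⟨(hmeas i).aemeasurable, hq.aemeasurable, hcopies i⟩)
      (f := fun y => ∑ i, a i * y i) ((dotProductBilin ℝ ℝ a).convexOn convex_univ)
      (by fun_prop) hc
  calc ∫⁻ ω, volume (Q ω) ∂ℙ ≤ ∫⁻ ω, (volume A + volume (Q ω ∩ Aᶜ)) ∂ℙ :=
        lintegral_mono fun ω =>
          (measure_mono fun x hx => by by_cases hxA : x ∈ A <;> simp [hx, hxA]).trans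
            (measure_union_le _ _)
    _ = volume A + ∫⁻ x in Aᶜ, ℙ {ω | x ∈ Q ω} := by
        rw [lintegral_add_left measurable_const, lintegral_const, measure_univ, mul_one]
        exact congrArg _ (lintegral_measure_inter_eq_setLIntegral _ _ hQ hA.compl)
    _ ≤ volume A + ∫⁻ x in Aᶜ, N * ξ x := by gcongr with x; exact hmem x
    _ ≤ volume A + N * (⨆ x ∈ Aᶜ, ξ x) * volume (Aᶜ ∩ {x | 0 < ξ x}) := by
        rw [lintegral_const_mul' _ _ (ENNReal.natCast_ne_top N), mul_assoc]
        gcongr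
        exact setLIntegral_le_iSup_mul_measure_pos _ hA.compl ξ

/-- Dyer–Füredi–McDiarmid upper bound: for an absolutely continuous random vector q and
i.i.d. copies q_1,…,q_N with convex hull Q_N, and any measurable A ⊆ ℝ^d,
E Vol(Q_N) ≤ Vol(A) + N · (sup_{Aᶜ} ξ) · Vol(Aᶜ ∩ {ξ > 0}), where
ξ(x) = inf of P(q ∈ H) over closed half-spaces H containing x. -/
theorem dfm_upper_bound
    (d N : ℕ) (hN : 1 ≤ N)
    {Ω : Type*} [MeasureSpace Ω] (hP : IsProbabilityMeasure (ℙ : Measure Ω))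
    (q : Ω → (Fin d → ℝ)) (hq : Measurable q)
    (hcont : Measure.map q ℙ ≪ (volume : Measure (Fin d → ℝ)))
    (qs : Fin N → Ω → (Fin d → ℝ)) (hmeas : ∀ i, Measurable (qs i))
    (hindep : iIndepFun qs ℙ)
    (hcopies : ∀ i, Measure.map (qs i) ℙ = Measure.map q ℙ)
    (A : Set (Fin d → ℝ)) (hA : MeasurableSet A)
    (ξ : (Fin d → ℝ) → ℝ≥0∞)
    (hξ : ξ = fun x => ⨅ (a : Fin d → ℝ) (_ : a ≠ 0) (c : ℝ) (_ : c ≤ ∑ i, a i * x i),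
        ℙ {ω | c ≤ ∑ i, a i * q ω i}) :
    ∫⁻ ω, volume (convexHull ℝ (Set.range fun i => qs i ω)) ∂ℙ
      ≤ volume A + N * (⨆ x ∈ Aᶜ, ξ x) * volume (Aᶜ ∩ {x | 0 < ξ x}) :=
  dfm_upper_bound_general d N hN hP q hq qs hmeas hcopies A hA ξ hξ
end

section
/- Let q be uniformly distributed on the simplex S_d = {x ∈ ℝ^d : x_i ≥ 0, Σ x_i ≤ 1}. For every θ ∈ ℝ^d with θ_i < d for all i, and every d ≥ 7, E[e^{⟨θ,q⟩}] ≤ d · Π_{i=1}^d 1/(1 − θ_i/d). -/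
/-!
On `S_d` the coordinates sum to at most one, so `e^{⟨θ,x⟩} ≤ e^d ∏ e^{-(d - θ_i) x_i}`, and
integrating the right-hand side over the whole orthant gives `e^d ∏ 1/(d - θ_i)`. Since
`Vol(S_d) = 1/d!` and `d! e^d ≤ d^{d+1}` for `d ≥ 7`, this is at most
`Vol(S_d) · d · ∏ d/(d - θ_i)`.
-/

open MeasureTheory

def orthoSimplex (d : ℕ) : Set (Fin d → ℝ) :=
  {x | (∀ i, 0 ≤ x i) ∧ ∑ i, x i ≤ 1}

open Real Set Nat

def scaledOrthoSimplex (d : ℕ) (c : ℝ) : Set (Fin d → ℝ) :=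
  {x | (∀ i, 0 ≤ x i) ∧ ∑ i, x i ≤ c}

lemma measurableSet_scaledOrthoSimplex (d : ℕ) (c : ℝ) :
    MeasurableSet (scaledOrthoSimplex d c) := by
  have hnonneg : MeasurableSet {x : Fin d → ℝ | ∀ i, 0 ≤ x i} := by
    simp only [ofPred_forall]
    exact MeasurableSet.iInter fun i => measurableSet_le measurable_const (measurable_pi_apply i)
  have hsum : Measurable fun x : Fin d → ℝ => ∑ i, x i := by fun_prop
  exact hnonneg.inter (measurableSet_le hsum measurable_const)

lemma cons_mem_scaledOrthoSimplex_iff {d : ℕ} {c t : ℝ} {y : Fin d → ℝ} :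
    Fin.cons t y ∈ scaledOrthoSimplex (d + 1) c ↔
      t ∈ Icc 0 c ∧ y ∈ scaledOrthoSimplex d (c - t) := by
  simp only [scaledOrthoSimplex, mem_ofPred_eq, Fin.forall_fin_succ, Fin.sum_univ_succ,
    Fin.cons_zero, Fin.cons_succ, Set.mem_Icc]
  constructor
  · rintro ⟨⟨ht, hy⟩, hsum⟩
    exact ⟨⟨ht, by linarith [Fintype.sum_nonneg (f := y) hy]⟩, hy, by linarith⟩
  · rintro ⟨⟨ht, -⟩, hy, hsum⟩
    exact ⟨⟨ht, hy⟩, by linarith⟩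

lemma volume_scaledOrthoSimplex_succ (d : ℕ) (c : ℝ) :
    volume (scaledOrthoSimplex (d + 1) c) =
      ∫⁻ t in Icc 0 c, volume (scaledOrthoSimplex d (c - t)) := by
  set e := MeasurableEquiv.piFinSuccAbove (fun _ : Fin (d + 1) => ℝ) 0
  have hS := measurableSet_scaledOrthoSimplex (d + 1) c
  rw [← (volume_preserving_piFinSuccAbove (fun _ : Fin (d + 1) => ℝ) 0).symm.measure_preimage
    hS.nullMeasurableSet, Measure.volume_eq_prod, Measure.prod_apply (hS.preimage e.symm.measurable),
    ← lintegral_indicator measurableSet_Icc]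
  congr with t
  have hslice : Prod.mk t ⁻¹' (e.symm ⁻¹' scaledOrthoSimplex (d + 1) c) =
      {y | t ∈ Icc 0 c ∧ y ∈ scaledOrthoSimplex d (c - t)} := by
    ext y
    simp only [e, mem_preimage, MeasurableEquiv.piFinSuccAbove_symm_apply,
      Fin.insertNthEquiv_zero, mem_ofPred_eq]
    exact cons_mem_scaledOrthoSimplex_iff
  by_cases ht : t ∈ Icc 0 c <;> simp [hslice, ht]

lemma integral_sub_pow_div_factorial (d : ℕ) (c : ℝ) :
    ∫ t in (0)..c, (c - t) ^ d / d ! = c ^ (d + 1) / (d + 1)! := by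
  rw [intervalIntegral.integral_div, intervalIntegral.integral_comp_sub_left (fun x => x ^ d),
    sub_self, sub_zero, integral_pow, Nat.factorial_succ]
  push_cast
  field_simp
  simp

lemma volume_scaledOrthoSimplex (d : ℕ) {c : ℝ} (hc : 0 ≤ c) :
    volume (scaledOrthoSimplex d c) = ENNReal.ofReal (c ^ d / d !) := by
  induction d generalizing c with
  | zero => simp [scaledOrthoSimplex, hc, volume_pi]
  | succ d ih =>
    rw [volume_scaledOrthoSimplex_succ, setLIntegral_congr_fun measurableSet_Icc
      (fun t ht => ih (sub_nonneg.2 ht.2)), ← ofReal_integral_eq_lintegral_ofReal,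
      integral_Icc_eq_integral_Ioc, ← intervalIntegral.integral_of_le hc,
      integral_sub_pow_div_factorial]
    · exact Continuous.integrableOn_Icc (by fun_prop)
    · filter_upwards [ae_restrict_mem measurableSet_Icc] with t ht
      have : 0 ≤ c - t := sub_nonneg.2 ht.2
      positivity

lemma toReal_volume_orthoSimplex (d : ℕ) : (volume (orthoSimplex d)).toReal = (d ! : ℝ)⁻¹ := by
  rw [orthoSimplex, ← scaledOrthoSimplex, volume_scaledOrthoSimplex d zero_le_one,
    ENNReal.toReal_ofReal (by positivity), one_pow, one_div]

lemma integrableOn_prod_exp_neg_mul_orthant {ι : Type*} [Fintype ι] {a : ι → ℝ}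
    (ha : ∀ i, 0 < a i) :
    IntegrableOn (fun x : ι → ℝ => ∏ i, exp (-a i * x i)) (univ.pi fun _ => Ici 0) := by
  rw [IntegrableOn, volume_pi, Measure.restrict_pi_pi]
  exact Integrable.fintype_prod fun i =>
    (integrableOn_Ici_iff_integrableOn_Ioi).2 (integrableOn_exp_mul_Ioi (neg_lt_zero.2 (ha i)) 0)

lemma integral_prod_exp_neg_mul_orthant {ι : Type*} [Fintype ι] {a : ι → ℝ}
    (ha : ∀ i, 0 < a i) :
    ∫ x in univ.pi (fun _ => Ici 0), ∏ i, exp (-a i * x i) = ∏ i, (a i)⁻¹ := by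
  rw [volume_pi, Measure.restrict_pi_pi, integral_fintype_prod_eq_prod (fun i t => exp (-a i * t))]
  refine Finset.prod_congr rfl fun i _ => ?_
  rw [integral_Ici_eq_integral_Ioi, integral_exp_mul_Ioi (neg_lt_zero.2 (ha i)), mul_zero,
    exp_zero, neg_div_neg_eq, one_div]

lemma setIntegral_le_setIntegral_of_subset {α : Type*} [MeasurableSpace α] {μ : Measure α}
    {f g : α → ℝ} {s t : Set α} (hs : MeasurableSet s) (hst : s ⊆ t) (hg : IntegrableOn g t μ)
    (hg0 : 0 ≤ g) (hfg : ∀ x ∈ s, f x ≤ g x) :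
    ∫ x in s, f x ∂μ ≤ ∫ x in t, g x ∂μ := by
  by_cases hf : IntegrableOn f s μ
  · calc ∫ x in s, f x ∂μ ≤ ∫ x in s, g x ∂μ := setIntegral_mono_on hf (hg.mono_set hst) hs hfg
      _ ≤ ∫ x in t, g x ∂μ := setIntegral_mono_set hg (ae_of_all _ hg0) hst.eventuallyLE
  · rw [integral_undef hf]
    exact integral_nonneg hg0

lemma exp_one_le_one_add_inv_pow {n : ℕ} (hn : 0 < n) : exp 1 ≤ (1 + (n : ℝ)⁻¹) ^ (n + 1) := by
  have hpos : (0 : ℝ) < 1 + (n : ℝ)⁻¹ := by positivity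
  have hlog : ((n : ℝ) + 1)⁻¹ ≤ log (1 + (n : ℝ)⁻¹) := by
    convert one_sub_inv_le_log_of_pos hpos using 1
    field_simp
    ring
  rw [← exp_log hpos, ← exp_nat_mul, exp_le_exp]
  push_cast
  rwa [inv_le_iff_one_le_mul₀ (by positivity), mul_comm] at hlog

lemma factorial_mul_exp_le_pow {n : ℕ} (hn : 7 ≤ n) : (n ! : ℝ) * exp n ≤ n ^ (n + 1) := by
  induction n, hn using Nat.le_induction with
  | base =>
    have he : exp 7 ≤ 2.7182818286 ^ 7 := by
      rw [show (7 : ℝ) = (7 : ℕ) * 1 by norm_num, exp_nat_mul]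
      exact pow_le_pow_left₀ (exp_pos 1).le exp_one_lt_d9.le 7
    norm_num [Nat.factorial] at he ⊢
    linarith
  | succ n hn ih =>
    have hn0 : (0 : ℝ) < n := by exact_mod_cast (by omega : 0 < n)
    calc ((n + 1)! : ℝ) * exp (n + 1 : ℕ) = (n + 1) * (n ! * exp n) * exp 1 := by
          push_cast [Nat.factorial_succ]; rw [exp_add]; ring
      _ ≤ (n + 1) * n ^ (n + 1) * (1 + (n : ℝ)⁻¹) ^ (n + 1) := by
          gcongr
          exact exp_one_le_one_add_inv_pow (by omega)
      _ = ((n + 1 : ℕ) : ℝ) ^ (n + 1 + 1) := by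
          rw [mul_assoc, ← mul_pow, mul_add, mul_one, mul_inv_cancel₀ hn0.ne']
          push_cast
          ring

lemma exp_sum_mul_le_of_sum_le_one {ι : Type*} [Fintype ι] {θ x : ι → ℝ} {c : ℝ} (hc : 0 ≤ c)
    (hx : ∑ i, x i ≤ 1) : exp (∑ i, θ i * x i) ≤ exp c * ∏ i, exp (-(c - θ i) * x i) := by
  rw [← exp_sum, ← exp_add, exp_le_exp]
  have hsplit : ∑ i, -(c - θ i) * x i = ∑ i, θ i * x i - c * ∑ i, x i := by
    rw [Finset.mul_sum, ← Finset.sum_sub_distrib]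
    exact Finset.sum_congr rfl fun i _ => by ring
  have := mul_le_mul_of_nonneg_left hx hc
  linarith

/-- For q uniform on S_d, d ≥ 7 and θ with θ_i < d for all i,
E e^{⟨θ,q⟩} ≤ d · ∏_i 1/(1 − θ_i/d). Here the expectation is written as the integral
over S_d divided by Vol(S_d), i.e. ∫_{S_d} e^{⟨θ,x⟩} dx ≤ Vol(S_d) · d · ∏_i 1/(1 − θ_i/d). -/
theorem mgf_uniform_simplex_bound
    (d : ℕ) (hd : 7 ≤ d) (θ : Fin d → ℝ) (hθ : ∀ i, θ i < d) :
    ∫ x in orthoSimplex d, Real.exp (∑ i, θ i * x i)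
      ≤ (volume (orthoSimplex d)).toReal * (d * ∏ i, 1 / (1 - θ i / d)) := by
  have hd0 : (0 : ℝ) < d := by exact_mod_cast (by omega : 0 < d)
  have ha : ∀ i, 0 < (d : ℝ) - θ i := fun i => sub_pos.2 (hθ i)
  have hfactor : ∀ i, 1 / (1 - θ i / d) = d * ((d : ℝ) - θ i)⁻¹ := fun i => by
    field_simp [(ha i).ne']
  calc ∫ x in orthoSimplex d, exp (∑ i, θ i * x i)
      ≤ ∫ x in univ.pi (fun _ => Ici 0), exp d * ∏ i, exp (-(d - θ i) * x i) :=
        setIntegral_le_setIntegral_of_subset (measurableSet_scaledOrthoSimplex d 1)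
          (fun x hx i _ => hx.1 i) ((integrableOn_prod_exp_neg_mul_orthant ha).const_mul _)
          (fun x => by positivity) fun x hx => exp_sum_mul_le_of_sum_le_one hd0.le hx.2
    _ = exp d * ∏ i, ((d : ℝ) - θ i)⁻¹ := by
        rw [integral_const_mul, integral_prod_exp_neg_mul_orthant ha]
    _ ≤ d ^ (d + 1) / d ! * ∏ i, ((d : ℝ) - θ i)⁻¹ := by
        gcongr
        · exact Finset.prod_nonneg fun i _ => (inv_pos.2 (ha i)).le
        · rw [le_div_iff₀ (by positivity), mul_comm]
          exact factorial_mul_exp_le_pow hd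
    _ = (volume (orthoSimplex d)).toReal * (d * ∏ i, 1 / (1 - θ i / d)) := by
        simp_rw [toReal_volume_orthoSimplex, hfactor, Finset.prod_mul_distrib, Finset.prod_const,
          Finset.card_univ, Fintype.card_fin]
        ring
end

section
/- With ψ(t) = t − 1 − log t for t > 0, one has ∫_0^1 ψ(t) e^{−t} dt + ∫_1^∞ ψ(t) t e^{−t} dt < 1. -/
/-! On `(0, 1]` we use `ψ ≥ 0` and `e^{-t} ≤ 1 - t + t²/2`, and compute
`∫₀¹ ψ(t) (1 - t + t²/2) dt = 31/72`. On `(1, ∞)` the Padé bound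
`log t ≥ 3(t² - 1)/(t² + 4t + 1)` gives `t ψ(t) ≤ (t - 1)² (t + 8)/16`, whose integral against
`e^{-t}` is `3/(2e)`. Finally `31/72 + 3/(2e) < 1` because `e > 108/41`. -/

open MeasureTheory Set Filter Real Topology

noncomputable def psi (t : ℝ) : ℝ := t - 1 - log t

lemma psi_nonneg {t : ℝ} (ht : 0 < t) : 0 ≤ psi t := by
  have := log_le_sub_one_of_pos ht
  unfold psi
  linarith

-- `(1 - t + t²/2) * (1 + t + t²/2) = 1 + t⁴/4`
lemma Real.exp_neg_le_one_sub_add_sq_div_two {t : ℝ} (ht : 0 ≤ t) :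
    exp (-t) ≤ 1 - t + t ^ 2 / 2 := by
  rw [exp_neg, inv_le_iff_one_le_mul₀' (exp_pos t)]
  have hP : 0 ≤ 1 - t + t ^ 2 / 2 := by nlinarith [sq_nonneg (t - 1)]
  nlinarith [mul_le_mul_of_nonneg_right (quadratic_le_exp_of_nonneg ht) hP, pow_nonneg ht 4]

lemma Real.three_mul_sq_sub_one_div_le_log {t : ℝ} (ht : 1 ≤ t) :
    3 * (t ^ 2 - 1) / (t ^ 2 + 4 * t + 1) ≤ log t := by
  let f : ℝ → ℝ := fun x => log x - 3 * (x ^ 2 - 1) / (x ^ 2 + 4 * x + 1)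
  let f' : ℝ → ℝ := fun x => (x - 1) ^ 4 / (x * (x ^ 2 + 4 * x + 1) ^ 2)
  have hderiv : ∀ x, 0 < x → HasDerivAt f (f' x) x := by
    intro x hx
    have hden : x ^ 2 + 4 * x + 1 ≠ 0 := by positivity
    have h := (hasDerivAt_log hx.ne').sub
      ((((hasDerivAt_pow 2 x).sub_const 1).const_mul 3).div
        (((hasDerivAt_pow 2 x).add ((hasDerivAt_id x).const_mul 4)).add_const 1) hden)
    refine h.congr_deriv ?_
    simp only [f', Pi.add_apply, id_eq, Nat.cast_ofNat]
    field_simp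
    ring
  have hmono : MonotoneOn f (Ici 1) := by
    refine monotoneOn_of_hasDerivWithinAt_nonneg (f' := f') (convex_Ici 1)
      (fun x hx => (hderiv x (one_pos.trans_le hx)).continuousAt.continuousWithinAt)
      (fun x hx => ?_) (fun x hx => ?_) <;> rw [interior_Ici] at hx
    · exact (hderiv x (one_pos.trans hx)).hasDerivWithinAt
    · have : 0 < x := one_pos.trans hx
      positivity
  have := hmono self_mem_Ici ht ht
  simp only [f, log_one, one_pow, sub_self, mul_zero, zero_div] at this
  linarith

lemma psi_mul_self_le {t : ℝ} (ht : 1 ≤ t) : psi t * t ≤ (t - 1) ^ 2 * (t + 8) / 16 := by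
  have hden : 0 < t ^ 2 + 4 * t + 1 := by positivity
  have hlog := (div_le_iff₀ hden).1 (three_mul_sq_sub_one_div_le_log ht)
  calc psi t * t ≤ (t - 1) ^ 2 * (t + 2) * t / (t ^ 2 + 4 * t + 1) := by
        rw [le_div_iff₀ hden]
        unfold psi
        nlinarith
    _ ≤ (t - 1) ^ 2 * (t + 8) / 16 := by
        rw [div_le_div_iff₀ hden (by norm_num)]
        -- `(t + 8) (t² + 4t + 1) - 16 t (t + 2) = t (t - 5/2)² + (t - 21/8)² + 71/64`
        have : 0 ≤ (t - 1) ^ 2 * (t * (t - 5 / 2) ^ 2 + (t - 21 / 8) ^ 2 + 71 / 64) := by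
          positivity
        nlinarith

lemma hasDerivAt_psi_mul_quadratic_primitive {x : ℝ} (hx : 0 < x) :
    HasDerivAt
      (fun t => t ^ 4 / 8 - 4 * t ^ 3 / 9 + 3 * t ^ 2 / 4 - t * log t * (1 - t / 2 + t ^ 2 / 6))
      (psi x * (1 - x + x ^ 2 / 2)) x := by
  have h := (((((hasDerivAt_pow 4 x).div_const 8).sub
    (((hasDerivAt_pow 3 x).const_mul 4).div_const 9)).add
    (((hasDerivAt_pow 2 x).const_mul 3).div_const 4)).sub
    ((hasDerivAt_mul_log hx.ne').mul ((((hasDerivAt_id x).div_const 2).const_sub 1).add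
      ((hasDerivAt_pow 2 x).div_const 6))))
  refine h.congr_deriv ?_
  simp only [psi, Pi.add_apply, id_eq, Nat.cast_ofNat]
  ring

lemma continuous_psi_mul_quadratic_primitive :
    Continuous
      fun t => t ^ 4 / 8 - 4 * t ^ 3 / 9 + 3 * t ^ 2 / 4 - t * log t * (1 - t / 2 + t ^ 2 / 6) := by
  have := continuous_mul_log
  fun_prop

lemma integrableOn_psi_mul_quadratic :
    IntegrableOn (fun t => psi t * (1 - t + t ^ 2 / 2)) (Ioc 0 1) :=
  intervalIntegral.integrableOn_deriv_of_nonneg continuous_psi_mul_quadratic_primitive.continuousOn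
    (fun x hx => hasDerivAt_psi_mul_quadratic_primitive hx.1)
    (fun x hx => mul_nonneg (psi_nonneg hx.1) (by nlinarith [sq_nonneg (x - 1)]))

lemma integral_psi_mul_quadratic : ∫ t in Ioc 0 1, psi t * (1 - t + t ^ 2 / 2) = 31 / 72 := by
  rw [← intervalIntegral.integral_of_le zero_le_one,
    intervalIntegral.integral_eq_sub_of_hasDerivAt_of_le zero_le_one
      continuous_psi_mul_quadratic_primitive.continuousOn
      (fun x hx => hasDerivAt_psi_mul_quadratic_primitive hx.1)
      ((intervalIntegrable_iff_integrableOn_Ioc_of_le zero_le_one).2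
        integrableOn_psi_mul_quadratic)]
  norm_num

lemma hasDerivAt_cubic_mul_exp_neg_primitive (x : ℝ) :
    HasDerivAt (fun t => -((t ^ 3 + 9 * t ^ 2 + 3 * t + 11) / 16 * exp (-t)))
      ((x - 1) ^ 2 * (x + 8) / 16 * exp (-x)) x := by
  have h := ((((((hasDerivAt_pow 3 x).add ((hasDerivAt_pow 2 x).const_mul 9)).add
    ((hasDerivAt_id x).const_mul 3)).add_const 11).div_const 16).mul
    (hasDerivAt_neg x).exp).neg
  refine h.congr_deriv ?_
  simp only [Pi.add_apply, id_eq, Nat.cast_ofNat]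
  ring

lemma tendsto_cubic_mul_exp_neg_primitive :
    Tendsto (fun t => -((t ^ 3 + 9 * t ^ 2 + 3 * t + 11) / 16 * exp (-t))) atTop (𝓝 0) := by
  have h := ((((tendsto_pow_mul_exp_neg_atTop_nhds_zero 3).add
    ((tendsto_pow_mul_exp_neg_atTop_nhds_zero 2).const_mul 9)).add
    ((tendsto_pow_mul_exp_neg_atTop_nhds_zero 1).const_mul 3)).add
    (tendsto_exp_neg_atTop_nhds_zero.const_mul 11)).div_const 16 |>.neg
  simp only [mul_zero, add_zero, zero_div, neg_zero] at h
  refine h.congr fun t => ?_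
  ring

lemma cubic_mul_exp_neg_nonneg {x : ℝ} (hx : -8 ≤ x) :
    0 ≤ (x - 1) ^ 2 * (x + 8) / 16 * exp (-x) := by
  have : 0 ≤ x + 8 := by linarith
  positivity

lemma integrableOn_cubic_mul_exp_neg :
    IntegrableOn (fun t => (t - 1) ^ 2 * (t + 8) / 16 * exp (-t)) (Ioi 1) :=
  integrableOn_Ioi_deriv_of_nonneg' (fun x _ => hasDerivAt_cubic_mul_exp_neg_primitive x)
    (fun x hx => cubic_mul_exp_neg_nonneg (by linarith [mem_Ioi.1 hx]))
    tendsto_cubic_mul_exp_neg_primitive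

lemma integral_cubic_mul_exp_neg :
    ∫ t in Ioi 1, (t - 1) ^ 2 * (t + 8) / 16 * exp (-t) = 3 / 2 * exp (-1) := by
  rw [integral_Ioi_of_hasDerivAt_of_nonneg' (fun x _ => hasDerivAt_cubic_mul_exp_neg_primitive x)
    (fun x hx => cubic_mul_exp_neg_nonneg (by linarith [mem_Ioi.1 hx]))
    tendsto_cubic_mul_exp_neg_primitive]
  norm_num

/-- With ψ(t) = t − 1 − log t, one has ∫_0^1 ψ(t)e^{−t} dt + ∫_1^∞ ψ(t)·t·e^{−t} dt < 1. -/
theorem psi_integrals_lt_one :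
    (∫ t in Set.Ioc (0 : ℝ) 1, (t - 1 - Real.log t) * Real.exp (-t))
        + (∫ t in Set.Ioi (1 : ℝ), (t - 1 - Real.log t) * t * Real.exp (-t)) < 1 := by
  have h₁ : ∫ t in Ioc (0 : ℝ) 1, psi t * exp (-t) ≤ 31 / 72 :=
    integral_psi_mul_quadratic ▸ setIntegral_mono_of_nonneg
      (fun t ht => mul_nonneg (psi_nonneg ht.1) (exp_pos _).le)
      (fun t ht => mul_le_mul_of_nonneg_left (exp_neg_le_one_sub_add_sq_div_two ht.1.le)
        (psi_nonneg ht.1))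
      integrableOn_psi_mul_quadratic
  have h₂ : ∫ t in Ioi (1 : ℝ), psi t * t * exp (-t) ≤ 3 / 2 * exp (-1) :=
    integral_cubic_mul_exp_neg ▸ setIntegral_mono_of_nonneg
      (fun t ht => mul_nonneg (mul_nonneg (psi_nonneg (one_pos.trans ht)) (one_pos.trans ht).le)
        (exp_pos _).le)
      (fun t ht => mul_le_mul_of_nonneg_right (psi_mul_self_le (le_of_lt ht)) (exp_pos _).le)
      integrableOn_cubic_mul_exp_neg
  have he : 3 / 2 * exp (-1) < 41 / 72 := by
    rw [exp_neg, ← div_eq_mul_inv, div_lt_iff₀ (exp_pos 1)]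
    linarith [exp_one_gt_d9]
  exact (add_le_add h₁ h₂).trans_lt (by linarith)
end
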